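/- Let (I,J) be a partial permutation of [n] with path type μ and cycle type ν (read off from its functional digraph). Then the atomic symmetric function factors as A_{n,I,J} = ⃗p_μ · p_ν, where ⃗p_μ is the path power sum and p_ν the classical power sum. In particular, if G is a disjoint union of paths and cycles and C is a cycle component of G on c vertices, then A_G = A_{G−C} · p_c. -/

import Mathlib

open MvPolynomial

/-- The power sum `p_d = ∑ x_i^d` in `N` variables. -/
noncomputable def pow1 (N d : ℕ) : MvPolynomial (Fin N) ℂ := ∑ i : Fin N, (X i) ^ d

/-- The power sum `p_ν = ∏ p_{ν_i}` indexed by a multiset of parts. -/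
noncomputable def pProd (N : ℕ) (ν : Multiset ℕ) : MvPolynomial (Fin N) ℂ :=
  (ν.map (pow1 N)).prod

/-- The cycle type of `w ∈ S_n` as a partition of `n` (cycle lengths, with fixed
points contributing parts equal to `1`). -/
def cycType {n : ℕ} (w : Equiv.Perm (Fin n)) : Multiset ℕ :=
  w.cycleType + Multiset.replicate (Finset.univ.filter fun i => w i = i).card 1

/-- The atomic symmetric function `A_{n,I,J} = ∑_{w(I)=J} p_{cyc(w)}` (in `N` variables). -/
noncomputable def atomic (n N : ℕ) (I J : List (Fin n)) : MvPolynomial (Fin N) ℂ :=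
  ∑ w ∈ Finset.univ.filter (fun w : Equiv.Perm (Fin n) => I.map ⇑w = J),
    pProd N (cycType w)

/-- The (directed) edges of a directed path whose vertices are listed in order. -/
def pathEdges {n : ℕ} (l : List (Fin n)) : List (Fin n × Fin n) := l.zip l.tail

/-- The (directed) edges of a directed cycle whose vertices are listed in cyclic order. -/
def cycleEdges {n : ℕ} (l : List (Fin n)) : List (Fin n × Fin n) := l.zip (l.rotate 1)

open Equiv Equiv.Perm

section Aux
variable {β : Type*} [Fintype β] [DecidableEq β]

def cycTypeG (w : Equiv.Perm β) : Multiset ℕ :=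
  w.cycleType + Multiset.replicate (Finset.univ.filter fun x => w x = x).card 1

lemma cycTypeG_irrel {β : Type*} {i1 i2 : Fintype β} {d1 d2 : DecidableEq β} (w : Equiv.Perm β) :
    @cycTypeG β i1 d1 w = @cycTypeG β i2 d2 w := by
  obtain rfl : i1 = i2 := Subsingleton.elim _ _
  obtain rfl : d1 = d2 := Subsingleton.elim _ _
  rfl

lemma cycType_eq_cycTypeG {n : ℕ} (w : Equiv.Perm (Fin n)) : cycType w = cycTypeG w := rfl

lemma pProd_add (N : ℕ) (s t : Multiset ℕ) : pProd N (s + t) = pProd N s * pProd N t := by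
  simp [pProd, Multiset.prod_add]

lemma cycTypeG_congr {γ δ : Type*} [Fintype γ] [DecidableEq γ] [Fintype δ] [DecidableEq δ]
    (e : γ ≃ δ) (u : Equiv.Perm γ) (v : Equiv.Perm δ) (h : ∀ x, e (u x) = v (e x)) :
    cycTypeG u = cycTypeG v := by
  classical
  have hv : v = u.extendDomain (e.trans (Equiv.subtypeUnivEquiv
      (fun _ : δ => trivial : ∀ x : δ, (fun _ => True) x)).symm) := by
    ext x
    rw [Equiv.Perm.extendDomain_apply_subtype _ _ trivial]
    have : ∀ y : δ, ((e.trans (Equiv.subtypeUnivEquiv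
        (fun _ : δ => trivial : ∀ x : δ, (fun _ => True) x)).symm).symm ⟨y, trivial⟩) = e.symm y := by
      intro y; rfl
    rw [this]
    have := h (e.symm x)
    simp only [Equiv.apply_symm_apply] at this
    rw [← this]
    rfl
  have hct : v.cycleType = u.cycleType := by
    rw [hv]; exact Equiv.Perm.cycleType_extendDomain _
  have hfix : (Finset.univ.filter fun x : δ => v x = x).card
      = (Finset.univ.filter fun x : γ => u x = x).card := by
    apply Finset.card_nbij' (fun x => e.symm x) (fun x => e x)
    · intro x hx
      simp only [Finset.mem_coe, Finset.mem_filter, Finset.mem_univ, true_and] at hx ⊢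
      have := h (e.symm x)
      simp only [Equiv.apply_symm_apply, hx] at this
      exact e.injective (by simpa using this)
    · intro x hx
      simp only [Finset.mem_coe, Finset.mem_filter, Finset.mem_univ, true_and] at hx ⊢
      rw [← h x, hx]
    · intro x _; simp
    · intro x _; simp
  rw [cycTypeG, cycTypeG, hct, hfix]

lemma fixedCard_subtypePerm (w : Equiv.Perm β) (p : β → Prop) [DecidablePred p]
    (hp : ∀ x, p x ↔ p (w x)) :
    (Finset.univ.filter fun x : Subtype p => w.subtypePerm (fun x => (hp x).symm) x = x).card
      = (Finset.univ.filter fun x : β => p x ∧ w x = x).card := by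
  refine Finset.card_bij (fun x _ => (x : β)) ?_ ?_ ?_
  · intro x hx
    simp only [Finset.mem_filter, Finset.mem_univ, true_and] at hx ⊢
    exact ⟨x.2, by simpa [Subtype.ext_iff] using hx⟩
  · intro x _ y _ hxy; exact Subtype.ext hxy
  · intro x hx
    simp only [Finset.mem_filter, Finset.mem_univ, true_and] at hx
    exact ⟨⟨x, hx.1⟩, by simp [Subtype.ext_iff, hx.2], rfl⟩

lemma perm_decomp (w : Equiv.Perm β) (p : β → Prop) [DecidablePred p]
    (hp : ∀ x, p x ↔ p (w x)) :
    w = Equiv.Perm.ofSubtype (w.subtypePerm (fun x => (hp x).symm))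
      * Equiv.Perm.ofSubtype (w.subtypePerm (fun x => not_iff_not.mpr (hp x).symm) : Equiv.Perm {x // ¬ p x}) := by
  ext x
  by_cases hx : p x
  · rw [Equiv.Perm.mul_apply,
      Equiv.Perm.ofSubtype_apply_of_not_mem _ (p := fun x => ¬ p x) (not_not.mpr hx),
      Equiv.Perm.ofSubtype_apply_of_mem _ hx]
    rfl
  · rw [Equiv.Perm.mul_apply, Equiv.Perm.ofSubtype_apply_of_mem _ (p := fun x => ¬ p x) hx,
      Equiv.Perm.ofSubtype_apply_of_not_mem]
    · rfl
    · exact fun hc => hx ((hp x).mpr hc)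

lemma cycTypeG_split (w : Equiv.Perm β) (p : β → Prop) [DecidablePred p]
    (hp : ∀ x, p x ↔ p (w x)) :
    cycTypeG w = cycTypeG (w.subtypePerm (fun x => (hp x).symm))
      + cycTypeG (w.subtypePerm (fun x => not_iff_not.mpr (hp x).symm) : Equiv.Perm {x // ¬ p x}) := by
  classical
  have hd : (Equiv.Perm.ofSubtype (w.subtypePerm (fun x => (hp x).symm))).Disjoint
      (Equiv.Perm.ofSubtype (w.subtypePerm (fun x => not_iff_not.mpr (hp x).symm) : Equiv.Perm {x // ¬ p x})) := by
    intro x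
    by_cases hx : p x
    · exact Or.inr (Equiv.Perm.ofSubtype_apply_of_not_mem _ (not_not.mpr hx))
    · exact Or.inl (Equiv.Perm.ofSubtype_apply_of_not_mem _ hx)
  have hct : w.cycleType = (w.subtypePerm (fun x => (hp x).symm)).cycleType
      + (w.subtypePerm (fun x => not_iff_not.mpr (hp x).symm) : Equiv.Perm {x // ¬ p x}).cycleType := by
    conv_lhs => rw [perm_decomp w p hp]
    rw [hd.cycleType_mul, Equiv.Perm.cycleType_ofSubtype, Equiv.Perm.cycleType_ofSubtype]
  have hfix : (Finset.univ.filter fun x : β => w x = x).card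
      = (Finset.univ.filter fun x : Subtype p => w.subtypePerm (fun x => (hp x).symm) x = x).card
        + (Finset.univ.filter fun x : {x // ¬ p x} =>
            (w.subtypePerm (fun x => not_iff_not.mpr (hp x).symm) : Equiv.Perm {x // ¬ p x}) x = x).card := by
    rw [fixedCard_subtypePerm w p hp, fixedCard_subtypePerm w (fun x => ¬ p x) (fun x => not_iff_not.mpr (hp x))]
    have h1 : (Finset.univ.filter fun x : β => p x ∧ w x = x)
        = (Finset.univ.filter fun x : β => w x = x).filter p := by
      ext x; simp [and_comm]
    have h2 : (Finset.univ.filter fun x : β => ¬ p x ∧ w x = x)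
        = (Finset.univ.filter fun x : β => w x = x).filter (fun x => ¬ p x) := by
      ext x; simp [and_comm]
    rw [h1, h2, Finset.card_filter_add_card_filter_not]
  rw [cycTypeG, cycTypeG, cycTypeG, hct, hfix, Multiset.replicate_add]
  abel
end Aux

section Cycle
variable {β : Type*} [Fintype β] [DecidableEq β]

lemma cycTypeG_cycle (l : List β) (hnd : l.Nodup) (hne : l ≠ [])
    (w : Equiv.Perm β) (hw : ∀ q ∈ l.zip (l.rotate 1), w q.1 = q.2)
    (hinv : ∀ x, x ∈ l.toFinset ↔ w x ∈ l.toFinset) :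
    cycTypeG (w.subtypePerm (fun x => (hinv x).symm) : Equiv.Perm {x // x ∈ l.toFinset}) = {l.length} := by
  classical
  have hlpos : 0 < l.length := List.length_pos_iff.mpr hne
  have hwi : ∀ (i : ℕ) (h : i < l.length), w l[i] = l[(i+1) % l.length]'(Nat.mod_lt _ hlpos) := by
    intro i h
    have hzl : i < (l.zip (l.rotate 1)).length := by
      simp [List.length_zip, List.length_rotate]; omega
    have hm : (l.zip (l.rotate 1))[i] ∈ l.zip (l.rotate 1) := List.getElem_mem _
    rw [List.getElem_zip] at hm
    have := hw _ hm
    simpa [List.getElem_rotate] using this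
  set p : β → Prop := fun x => x ∈ l.toFinset with hp
  have hall : ∀ x ∈ l, x ∈ l.toFinset := fun x hx => List.mem_toFinset.mpr hx
  set l' : List {x // x ∈ l.toFinset} := l.pmap (fun x h => ⟨x, h⟩) hall with hl'
  have hlen' : l'.length = l.length := List.length_pmap
  have hget : ∀ (i : ℕ) (h : i < l'.length),
      l'[i] = ⟨l[i]'(hlen' ▸ h), hall _ (List.getElem_mem _)⟩ := by
    intro i h
    simp [hl', List.getElem_pmap]
  have hnd' : l'.Nodup := hnd.pmap (fun a _ b _ h => congrArg Subtype.val h)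
  have hmem' : ∀ y : {x // x ∈ l.toFinset}, y ∈ l' := by
    intro y
    exact List.mem_pmap.mpr ⟨y.1, List.mem_toFinset.mp y.2, rfl⟩
  have hperm : (w.subtypePerm (fun x => (hinv x).symm) : Equiv.Perm {x // x ∈ l.toFinset}) = l'.formPerm := by
    ext y
    obtain ⟨i, hi, hiy⟩ := List.mem_iff_getElem.mp (hmem' y)
    subst hiy
    rw [List.formPerm_apply_getElem _ hnd']
    simp only [Equiv.Perm.subtypePerm_apply]
    rw [hget i hi, hget ((i+1) % l'.length) (Nat.mod_lt _ (by omega))]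
    have hmod : (i+1) % l'.length = (i+1) % l.length := by rw [hlen']
    simp only [hmod]
    exact hwi i (hlen' ▸ hi)
  rw [hperm]
  have hcard : Fintype.card {x // x ∈ l.toFinset} = l.length := by
    rw [Fintype.card_coe, List.toFinset_card_of_nodup hnd]
  rcases eq_or_lt_of_le (Nat.one_le_iff_ne_zero.mpr (by omega : l.length ≠ 0)) with h1 | h2
  · -- length = 1
    have hlen1 : l'.length = 1 := by omega
    obtain ⟨a, ha⟩ := List.length_eq_one_iff.mp hlen1
    rw [ha, List.formPerm_singleton]
    have h1' : (Finset.univ.filter fun x : {x // x ∈ l.toFinset} =>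
        (1 : Equiv.Perm {x // x ∈ l.toFinset}) x = x) = Finset.univ := by simp
    rw [cycTypeG, Equiv.Perm.cycleType_one, h1', Finset.card_univ, hcard, ← h1]
    simp
  · -- 2 ≤ length
    have h2' : 2 ≤ l'.length := by omega
    have hcyc : (l'.formPerm).IsCycle := List.isCycle_formPerm hnd' h2'
    have hsupp : (l'.formPerm).support = l'.toFinset := by
      apply List.support_formPerm_of_nodup _ hnd'
      intro x hx
      rw [hx] at h2'
      simp at h2'
    have hsuppcard : (l'.formPerm).support.card = l.length := by
      rw [hsupp, List.toFinset_card_of_nodup hnd', hlen']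
    have hfixed : (Finset.univ.filter fun x => l'.formPerm x = x) = (l'.formPerm).supportᶜ := by
      ext x
      simp [Equiv.Perm.mem_support]
    rw [cycTypeG, hcyc.cycleType, hfixed, Finset.card_compl, hsuppcard, hcard]
    simp
end Cycle

section Helpers
variable {β : Type*} [DecidableEq β]

lemma cycle_apply_getElem (l : List β) (w : Equiv.Perm β)
    (hw : ∀ q ∈ l.zip (l.rotate 1), w q.1 = q.2) (i : ℕ) (h : i < l.length) :
    w l[i] = l[(i+1) % l.length]'(Nat.mod_lt _ (by omega)) := by
  have hzl : i < (l.zip (l.rotate 1)).length := by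
    simp [List.length_zip, List.length_rotate]; omega
  have hm : (l.zip (l.rotate 1))[i] ∈ l.zip (l.rotate 1) := List.getElem_mem _
  rw [List.getElem_zip] at hm
  have := hw _ hm
  simpa [List.getElem_rotate] using this

lemma finset_perm_inv [Fintype β] (B : Finset β) (w : Equiv.Perm β)
    (h : ∀ x ∈ B, w x ∈ B) : ∀ x, x ∈ B ↔ w x ∈ B := by
  have himg : B.image w = B := by
    apply Finset.eq_of_subset_of_card_le
    · intro y hy
      obtain ⟨x, hx, rfl⟩ := Finset.mem_image.mp hy
      exact h x hx
    · rw [Finset.card_image_of_injective _ w.injective]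
  intro x
  constructor
  · exact h x
  · intro hwx
    rw [← himg] at hwx
    obtain ⟨y, hy, hxy⟩ := Finset.mem_image.mp hwx
    rwa [← w.injective hxy]

lemma multiset_rel_exists {α γ : Type*} {r : α → γ → Prop} {s : Multiset α} {t : Multiset γ}
    (h : Multiset.Rel r s t) :
    ∃ u : Multiset (α × γ), u.map Prod.fst = s ∧ u.map Prod.snd = t ∧ ∀ q ∈ u, r q.1 q.2 := by
  induction h with
  | zero => exact ⟨0, by simp⟩
  | @cons a b as bs hab _ ih =>
    obtain ⟨u, h1, h2, h3⟩ := ih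
    refine ⟨(a, b) ::ₘ u, by simp [h1], by simp [h2], ?_⟩
    intro q hq
    rcases Multiset.mem_cons.mp hq with rfl | hq
    · exact hab
    · exact h3 q hq
end Helpers

lemma cycTypeG_cycles : ∀ (k : ℕ) (β : Type) [Fintype β] [DecidableEq β]
    (C : Multiset (List β)), C.card = k →
    ∀ (_hne : ∀ l ∈ C, l ≠ [])
    (hnd : (C.bind (fun l => (l : Multiset β))).Nodup)
    (w : Equiv.Perm β) (hw : ∀ l ∈ C, ∀ q ∈ l.zip (l.rotate 1), w q.1 = q.2)
    (A : Finset β) (hA : A.val = C.bind (fun l => (l : Multiset β)))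
    (hinv : ∀ x, x ∈ A ↔ w x ∈ A),
    cycTypeG (w.subtypePerm (fun x => (hinv x).symm) : Equiv.Perm {x // x ∈ A}) = C.map List.length := by
  intro k
  induction k with
  | zero =>
    intro β _ _ C hC hne hnd w hw A hA hinv
    have hC0 : C = 0 := Multiset.card_eq_zero.mp hC
    subst hC0
    have hA0 : A = ∅ := by
      ext x
      simp only [← Finset.mem_val, hA]
      simp
    subst hA0
    haveI : IsEmpty {x // x ∈ (∅ : Finset β)} :=
      ⟨fun x => absurd x.2 (Finset.notMem_empty _)⟩
    have h1 : (Equiv.Perm.subtypePerm w (fun x => (hinv x).symm)) = 1 := by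
      ext x
      exact absurd x.2 (Finset.notMem_empty _)
    rw [h1, cycTypeG, Equiv.Perm.cycleType_one]
    simp
  | succ k ih =>
    intro β _ _ C hC hne hnd w hw A hA hinv
    classical
    have hpos : 0 < C.card := by omega
    obtain ⟨l, hl⟩ := Multiset.card_pos_iff_exists_mem.mp hpos
    obtain ⟨C', rfl⟩ := Multiset.exists_cons_of_mem hl
    have hbind : (l ::ₘ C').bind (fun l => (l : Multiset β))
        = ↑l + C'.bind (fun l => (l : Multiset β)) := Multiset.cons_bind _ _ _
    have hlnd : l.Nodup := by
      have hle : (l : Multiset β) ≤ (l ::ₘ C').bind (fun l => (l : Multiset β)) := by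
        rw [hbind]; exact le_add_right le_rfl
      exact Multiset.nodup_of_le hle hnd
    have hC'nd : (C'.bind (fun l => (l : Multiset β))).Nodup := by
      have hle : C'.bind (fun l => (l : Multiset β))
          ≤ (l ::ₘ C').bind (fun l => (l : Multiset β)) := by
        rw [hbind]; exact le_add_left le_rfl
      exact Multiset.nodup_of_le hle hnd
    have hlne : l ≠ [] := hne l (Multiset.mem_cons_self _ _)
    have hwl : ∀ q ∈ l.zip (l.rotate 1), w q.1 = q.2 := hw l (Multiset.mem_cons_self _ _)
    set B : Finset β := l.toFinset with hB
    have hBval : B.val = (l : Multiset β) := by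
      rw [hB, List.toFinset_val, List.dedup_eq_self.mpr hlnd]
    have hBA : B ⊆ A := by
      intro x hx
      rw [← Finset.mem_val, hA, hbind, Multiset.mem_add]
      exact Or.inl (by simpa [hBval] using (List.mem_toFinset.mp hx))
    have hwB : ∀ x ∈ B, w x ∈ B := by
      intro x hx
      obtain ⟨i, hi, rfl⟩ := List.mem_iff_getElem.mp (List.mem_toFinset.mp hx)
      rw [cycle_apply_getElem l w hwl i hi]
      exact List.mem_toFinset.mpr (List.getElem_mem _)
    have hBinv := finset_perm_inv B w hwB
    have hA'val : (A \ B).val = C'.bind (fun l => (l : Multiset β)) := by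
      rw [Finset.sdiff_val, hA, hbind, hBval, add_tsub_cancel_left]
    have hwA' : ∀ x, x ∈ A \ B ↔ w x ∈ A \ B := by
      intro x
      simp only [Finset.mem_sdiff]
      rw [← hinv x, ← hBinv x]
    have hq : ∀ x : {x // x ∈ A},
        ((x : β) ∈ B) ↔ (((w.subtypePerm (fun x => (hinv x).symm)) x : β) ∈ B) := fun x => hBinv x
    rw [cycTypeG_split (w.subtypePerm (fun x => (hinv x).symm)) (fun x => (x : β) ∈ B) hq]
    have h1 : cycTypeG ((w.subtypePerm (fun x => (hinv x).symm)).subtypePerm (p := fun x : {x // x ∈ A} => (x : β) ∈ B) (fun x => (hq x).symm))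
        = cycTypeG (w.subtypePerm (fun x => (hBinv x).symm) : Equiv.Perm {x // x ∈ B}) := by
      refine cycTypeG_congr ⟨fun x => ⟨(x : {x // x ∈ A}), x.2⟩,
        fun y => ⟨⟨(y : β), hBA y.2⟩, y.2⟩,
        fun x => Subtype.ext (Subtype.ext rfl), fun y => Subtype.ext rfl⟩ _ _ ?_
      intro x
      exact Subtype.ext rfl
    have h2 : cycTypeG ((w.subtypePerm (fun x => (hinv x).symm)).subtypePerm
          (p := fun x : {x // x ∈ A} => ¬ (x : β) ∈ B) (fun x => not_iff_not.mpr (hq x).symm) : Equiv.Perm {x : {x // x ∈ A} // ¬ (x : β) ∈ B})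
        = cycTypeG (w.subtypePerm (fun x => (hwA' x).symm) : Equiv.Perm {x // x ∈ A \ B}) := by
      refine cycTypeG_congr ⟨fun x => ⟨((x : {x // x ∈ A}) : β),
          Finset.mem_sdiff.mpr ⟨(x : {x // x ∈ A}).2, x.2⟩⟩,
        fun y => ⟨⟨(y : β), (Finset.mem_sdiff.mp y.2).1⟩, (Finset.mem_sdiff.mp y.2).2⟩,
        fun x => Subtype.ext (Subtype.ext rfl), fun y => Subtype.ext rfl⟩ _ _ ?_
      intro x
      exact Subtype.ext rfl
    rw [h1, h2, cycTypeG_cycle l hlnd hlne w hwl hBinv,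
      ih β C' (by simpa using hC) (fun l' hl' => hne l' (Multiset.mem_cons_of_mem hl'))
        hC'nd w (fun l' hl' => hw l' (Multiset.mem_cons_of_mem hl')) (A \ B) hA'val hwA']
    rw [Multiset.map_cons, ← Multiset.singleton_add]

section ZipHelpers
variable {α γ : Type*}

lemma mem_zip_iff_getElem {I : List α} {J : List γ} {a : α} {b : γ} :
    (a, b) ∈ I.zip J ↔ ∃ (i : ℕ) (h1 : i < I.length) (h2 : i < J.length),
      I[i] = a ∧ J[i] = b := by
  constructor
  · intro h
    obtain ⟨i, hi, hab⟩ := List.mem_iff_getElem.mp h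
    rw [List.getElem_zip] at hab
    have h1 : i < I.length := by
      have := hi; rw [List.length_zip] at this; omega
    have h2 : i < J.length := by
      have := hi; rw [List.length_zip] at this; omega
    exact ⟨i, h1, h2, congrArg Prod.fst hab, congrArg Prod.snd hab⟩
  · rintro ⟨i, h1, h2, ha, hb⟩
    apply List.mem_iff_getElem.mpr
    refine ⟨i, by rw [List.length_zip]; omega, ?_⟩
    rw [List.getElem_zip, ha, hb]

lemma map_eq_zip_iff (g : α → γ) (I : List α) (J : List γ) (hlen : I.length = J.length) :
    I.map g = J ↔ ∀ q ∈ I.zip J, g q.1 = q.2 := by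
  constructor
  · rintro h ⟨a, b⟩ hq
    obtain ⟨i, h1, h2, ha, hb⟩ := mem_zip_iff_getElem.mp hq
    have : (I.map g)[i]'(by simpa using h1) = J[i]'h2 := by
      have h3 : i < (I.map g).length := by simpa using h1
      have := List.getElem_of_eq h h3
      rw [this]
    rw [List.getElem_map] at this
    simp only [ha, hb] at this
    exact this
  · intro h
    apply List.ext_getElem (by simpa using hlen)
    intro i hi hj
    rw [List.getElem_map]
    exact h (I[i]'(by simpa using hi), J[i]) (mem_zip_iff_getElem.mpr
      ⟨i, by simpa using hi, hj, rfl, rfl⟩)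

lemma zip_uniq_fst {I : List α} {J : List γ} (hI : I.Nodup) {a : α} {b b' : γ}
    (h1 : (a, b) ∈ I.zip J) (h2 : (a, b') ∈ I.zip J) : b = b' := by
  obtain ⟨i, hi1, hi2, hia, hib⟩ := mem_zip_iff_getElem.mp h1
  obtain ⟨j, hj1, hj2, hja, hjb⟩ := mem_zip_iff_getElem.mp h2
  have : i = j := hI.getElem_inj_iff.mp (by rw [hia, hja])
  subst this
  rw [← hib, ← hjb]

lemma zip_uniq_snd {I : List α} {J : List γ} (hJ : J.Nodup) {a a' : α} {b : γ}
    (h1 : (a, b) ∈ I.zip J) (h2 : (a', b) ∈ I.zip J) : a = a' := by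
  obtain ⟨i, hi1, hi2, hia, hib⟩ := mem_zip_iff_getElem.mp h1
  obtain ⟨j, hj1, hj2, hja, hjb⟩ := mem_zip_iff_getElem.mp h2
  have : i = j := hJ.getElem_inj_iff.mp (by rw [hib, hjb])
  subst this
  rw [← hia, ← hja]
end ZipHelpers

set_option maxHeartbeats 1600000 in
/-- Path-cycle factorization of atomic symmetric functions.  Suppose the functional
digraph of the partial permutation `(I,J)` of `[n]` decomposes into path components `P`
and cycle components `C`, with path type `μ = P.map length` and cycle type
`ν = C.map length`; and suppose `(I₀,J₀)` is a partial permutation of `[m]` whose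
digraph is a disjoint union of directed paths `P₀` of the same sizes as `P` (so that
`A_{m,I₀,J₀}` is the path power sum `⃗p_μ`).  Then `A_{n,I,J} = ⃗p_μ · p_ν`. -/
theorem stmt14 (n m N : ℕ) (I J : List (Fin n)) (I₀ J₀ : List (Fin m))
    (hI : I.Nodup) (hJ : J.Nodup) (hlen : I.length = J.length)
    (hI₀ : I₀.Nodup) (hJ₀ : J₀.Nodup) (hlen₀ : I₀.length = J₀.length)
    (P C : Multiset (List (Fin n)))
    (hPne : ∀ l ∈ P, l ≠ []) (hCne : ∀ l ∈ C, l ≠ [])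
    (hvert : (P + C).bind (fun l => (l : Multiset (Fin n))) =
      (Finset.univ : Finset (Fin n)).val)
    (hedge : ∀ a b : Fin n, (a, b) ∈ I.zip J ↔
      ((∃ l ∈ P, (a, b) ∈ pathEdges l) ∨ (∃ l ∈ C, (a, b) ∈ cycleEdges l)))
    (P₀ : Multiset (List (Fin m)))
    (hP₀ne : ∀ l ∈ P₀, l ≠ [])
    (hvert₀ : P₀.bind (fun l => (l : Multiset (Fin m))) =
      (Finset.univ : Finset (Fin m)).val)
    (hedge₀ : ∀ a b : Fin m, (a, b) ∈ I₀.zip J₀ ↔ (∃ l ∈ P₀, (a, b) ∈ pathEdges l))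
    (hmatch : P₀.map List.length = P.map List.length) :
    atomic n N I J = atomic m N I₀ J₀ * pProd N (C.map List.length) := by
  classical
  -- vertex partition
  set SP := P.bind (fun l => (l : Multiset (Fin n))) with hSPdef
  set SC := C.bind (fun l => (l : Multiset (Fin n))) with hSCdef
  have hPC : SP + SC = (Finset.univ : Finset (Fin n)).val := by
    rw [hSPdef, hSCdef, ← Multiset.add_bind]; exact hvert
  have hndPC : (SP + SC).Nodup := by rw [hPC]; exact Finset.univ.nodup
  obtain ⟨hSPnd, hSCnd, hdisj⟩ := Multiset.nodup_add.mp hndPC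
  have hcases : ∀ x : Fin n, x ∈ SP ∨ x ∈ SC := by
    intro x
    have hx : x ∈ SP + SC := by rw [hPC]; exact Finset.mem_val.mpr (Finset.mem_univ x)
    exact Multiset.mem_add.mp hx
  have hcompl : ∀ x : Fin n, x ∈ SP ↔ x ∉ SC := by
    intro x
    constructor
    · intro h1 h2; exact Multiset.disjoint_left.mp hdisj h1 h2
    · intro h2; rcases hcases x with h | h
      · exact h
      · exact absurd h h2
  set Sfin : Finset (Fin n) := ⟨SP, hSPnd⟩ with hSfin
  set Tfin : Finset (Fin n) := ⟨SC, hSCnd⟩ with hTfin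
  have hmemS : ∀ x, x ∈ Sfin ↔ x ∈ SP := fun x => Iff.rfl
  have hmemT : ∀ x, x ∈ Tfin ↔ x ∈ SC := fun x => Iff.rfl
  -- pairing of P₀ with P
  have hrel : Multiset.Rel (fun (l₀ : List (Fin m)) (l : List (Fin n)) =>
      l₀.length = l.length) P₀ P := by
    have h := hmatch
    rw [← Multiset.rel_eq] at h
    rwa [Multiset.rel_map] at h
  obtain ⟨D, hDfst, hDsnd, hDlen⟩ := multiset_rel_exists hrel
  set E : Multiset (Fin m × Fin n) :=
    D.bind (fun q => ((q.1.zip q.2 : List (Fin m × Fin n)) : Multiset (Fin m × Fin n)))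
    with hEdef
  have hEfst : E.map Prod.fst = (Finset.univ : Finset (Fin m)).val := by
    rw [hEdef, Multiset.map_bind, ← hvert₀, ← hDfst, Multiset.bind_map]
    apply Multiset.bind_congr
    intro q hq
    have h1 : (q.1.zip q.2).map Prod.fst = q.1 := List.map_fst_zip (le_of_eq (hDlen q hq))
    exact_mod_cast congrArg (fun l : List (Fin m) => (l : Multiset (Fin m))) h1
  have hEsnd : E.map Prod.snd = SP := by
    rw [hEdef, Multiset.map_bind, hSPdef, ← hDsnd, Multiset.bind_map]
    apply Multiset.bind_congr
    intro q hq
    have h1 : (q.1.zip q.2).map Prod.snd = q.2 := List.map_snd_zip (ge_of_eq (hDlen q hq))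
    exact_mod_cast congrArg (fun l : List (Fin n) => (l : Multiset (Fin n))) h1
  have hEfstnd : (E.map Prod.fst).Nodup := by rw [hEfst]; exact Finset.univ.nodup
  have hEsndnd : (E.map Prod.snd).Nodup := by rw [hEsnd]; exact hSPnd
  have hfex : ∀ a : Fin m, ∃ b, (a, b) ∈ E := by
    intro a
    have ha : a ∈ E.map Prod.fst := by
      rw [hEfst]; exact Finset.mem_val.mpr (Finset.mem_univ a)
    obtain ⟨q, hq, hqa⟩ := Multiset.mem_map.mp ha
    exact ⟨q.2, by rwa [← hqa, Prod.mk.eta]⟩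
  choose f hf using hfex
  have funiq : ∀ a b, (a, b) ∈ E → f a = b := by
    intro a b h
    have h2 := Multiset.inj_on_of_nodup_map hEfstnd _ (hf a) _ h rfl
    exact congrArg Prod.snd h2
  have finj : Function.Injective f := by
    intro a a' h
    have h2 := Multiset.inj_on_of_nodup_map hEsndnd _ (hf a) _ (hf a') (by simpa using h)
    exact congrArg Prod.fst h2
  have frange : ∀ a, f a ∈ SP := by
    intro a
    rw [← hEsnd]
    exact Multiset.mem_map.mpr ⟨(a, f a), hf a, rfl⟩
  have fsurj : ∀ x ∈ SP, ∃ a, f a = x := by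
    intro x hx
    rw [← hEsnd] at hx
    obtain ⟨q, hq, hqx⟩ := Multiset.mem_map.mp hx
    refine ⟨q.1, ?_⟩
    rw [funiq q.1 q.2 (by rwa [Prod.mk.eta])]
    exact hqx
  have hfD : ∀ q ∈ D, ∀ (i : ℕ) (h1 : i < q.1.length) (h2 : i < q.2.length),
      f (q.1[i]) = q.2[i] := by
    intro q hq i h1 h2
    apply funiq
    rw [hEdef]
    refine Multiset.mem_bind.mpr ⟨q, hq, ?_⟩
    refine Multiset.mem_coe.mpr ?_
    exact mem_zip_iff_getElem.mpr ⟨i, h1, h2, rfl, rfl⟩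
  -- edge transfer
  have hedge₀n : ∀ a b : Fin m, (a, b) ∈ I₀.zip J₀ → (f a, f b) ∈ I.zip J := by
    intro a b hab
    obtain ⟨l₀, hl₀, hab'⟩ := (hedge₀ a b).mp hab
    simp only [pathEdges] at hab'
    obtain ⟨i, h1, h2, ha, hb⟩ := mem_zip_iff_getElem.mp hab'
    rw [List.getElem_tail] at hb
    rw [← hDfst] at hl₀
    obtain ⟨q, hq, rfl⟩ := Multiset.mem_map.mp hl₀
    have hql := hDlen q hq
    have hlt : i + 1 < q.1.length := by
      have := h2; rw [List.length_tail] at this; omega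
    have e1 : f a = q.2[i]'(by omega) := by
      rw [← ha]; exact hfD q hq i h1 (by omega)
    have e2 : f b = q.2[i+1]'(by omega) := by
      rw [← hb]; exact hfD q hq (i+1) hlt (by omega)
    apply (hedge (f a) (f b)).mpr
    left
    refine ⟨q.2, by rw [← hDsnd]; exact Multiset.mem_map.mpr ⟨q, hq, rfl⟩, ?_⟩
    simp only [pathEdges]
    refine mem_zip_iff_getElem.mpr ⟨i, by omega, by rw [List.length_tail]; omega, e1.symm, ?_⟩
    rw [List.getElem_tail]
    exact e2.symm
  have hedgen₀ : ∀ a b : Fin m, (f a, f b) ∈ I.zip J → (a, b) ∈ I₀.zip J₀ := by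
    intro a b hab
    rcases (hedge _ _).mp hab with ⟨l, hl, hab'⟩ | ⟨l, hl, hab'⟩
    · simp only [pathEdges] at hab'
      obtain ⟨i, h1, h2, ha, hb⟩ := mem_zip_iff_getElem.mp hab'
      rw [List.getElem_tail] at hb
      rw [← hDsnd] at hl
      obtain ⟨q, hq, rfl⟩ := Multiset.mem_map.mp hl
      have hql := hDlen q hq
      have hlt : i + 1 < q.2.length := by
        have := h2; rw [List.length_tail] at this; omega
      have e1 : f (q.1[i]'(by omega)) = q.2[i]'h1 := hfD q hq i (by omega) h1
      have e2 : f (q.1[i+1]'(by omega)) = q.2[i+1]'hlt := hfD q hq (i+1) (by omega) hlt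
      have ha' : a = q.1[i]'(by omega) := finj (by rw [e1, ha])
      have hb' : b = q.1[i+1]'(by omega) := finj (by rw [e2, hb])
      apply (hedge₀ a b).mpr
      refine ⟨q.1, by rw [← hDfst]; exact Multiset.mem_map.mpr ⟨q, hq, rfl⟩, ?_⟩
      simp only [pathEdges]
      refine mem_zip_iff_getElem.mpr ⟨i, by omega, by rw [List.length_tail]; omega, ha'.symm, ?_⟩
      rw [List.getElem_tail]
      exact hb'.symm
    · exfalso
      have hfa : f a ∈ SC := by
        rw [hSCdef]
        refine Multiset.mem_bind.mpr ⟨l, hl, ?_⟩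
        simp only [cycleEdges] at hab'
        exact Multiset.mem_coe.mpr (List.of_mem_zip hab').1
      exact (hcompl (f a)).mp (frange a) hfa
  -- constraints
  have hmemn : ∀ w : Equiv.Perm (Fin n), I.map ⇑w = J ↔ ∀ q ∈ I.zip J, w q.1 = q.2 :=
    fun w => map_eq_zip_iff _ _ _ hlen
  have hmemm : ∀ v : Equiv.Perm (Fin m), I₀.map ⇑v = J₀ ↔ ∀ q ∈ I₀.zip J₀, v q.1 = q.2 :=
    fun v => map_eq_zip_iff _ _ _ hlen₀
  have hTsucc : ∀ x ∈ SC, ∃ y, (x, y) ∈ I.zip J ∧ y ∈ SC := by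
    intro x hx
    rw [hSCdef] at hx
    obtain ⟨l, hl, hxl⟩ := Multiset.mem_bind.mp hx
    rw [Multiset.mem_coe] at hxl
    obtain ⟨i, hi, rfl⟩ := List.mem_iff_getElem.mp hxl
    have hlpos : 0 < l.length := by omega
    refine ⟨l[(i+1) % l.length]'(Nat.mod_lt _ hlpos), ?_, ?_⟩
    · apply (hedge _ _).mpr
      right
      refine ⟨l, hl, ?_⟩
      simp only [cycleEdges]
      refine mem_zip_iff_getElem.mpr ⟨i, hi, by rw [List.length_rotate]; omega, rfl, ?_⟩
      rw [List.getElem_rotate]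
    · rw [hSCdef]
      exact Multiset.mem_bind.mpr ⟨l, hl, Multiset.mem_coe.mpr (List.getElem_mem _)⟩
  have hwcyc : ∀ (w : Equiv.Perm (Fin n)), (∀ q ∈ I.zip J, w q.1 = q.2) →
      ∀ l ∈ C, ∀ q ∈ l.zip (l.rotate 1), w q.1 = q.2 := by
    intro w hw l hl q hq
    apply hw
    apply (hedge q.1 q.2).mpr
    right
    exact ⟨l, hl, by simpa only [cycleEdges, Prod.mk.eta] using hq⟩
  have hTinv : ∀ (w : Equiv.Perm (Fin n)), (∀ q ∈ I.zip J, w q.1 = q.2) →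
      ∀ x, x ∈ Tfin ↔ w x ∈ Tfin := by
    intro w hw
    apply finset_perm_inv
    intro x hx
    obtain ⟨y, hy, hySC⟩ := hTsucc x ((hmemT x).mp hx)
    have := hw (x, y) hy
    rw [(hmemT _)]
    simpa [this] using hySC
  have hSinv : ∀ (w : Equiv.Perm (Fin n)), (∀ q ∈ I.zip J, w q.1 = q.2) →
      ∀ x, x ∈ Sfin ↔ w x ∈ Sfin := by
    intro w hw x
    rw [hmemS, hmemS, hcompl, hcompl]
    exact not_congr (hTinv w hw x)
  have hΦex : ∃ Φ : Equiv.Perm (Fin n) → Equiv.Perm (Fin m),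
      ∀ w, (∀ q ∈ I.zip J, w q.1 = q.2) → ∀ a, f (Φ w a) = w (f a) := by
    refine ⟨fun w => if hb : Function.Bijective (fun a : Fin m =>
        if h : ∃ b, f b = w (f a) then h.choose else a) then Equiv.ofBijective _ hb else 1, ?_⟩
    intro w hw
    have hex : ∀ a, ∃ b, f b = w (f a) := by
      intro a
      exact fsurj _ ((hSinv w hw (f a)).mp ((hmemS _).mpr (frange a)))
    have hΦf : ∀ a, f (if h : ∃ b, f b = w (f a) then h.choose else a) = w (f a) := by
      intro a
      rw [dif_pos (hex a)]
      exact (hex a).choose_spec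
    have hbij : Function.Bijective (fun a : Fin m =>
        if h : ∃ b, f b = w (f a) then h.choose else a) := by
      apply Finite.injective_iff_bijective.mp
      intro a a' h
      have hww : w (f a) = w (f a') := by
        rw [← hΦf a, ← hΦf a']
        exact congrArg f h
      exact finj (w.injective hww)
    intro a
    beta_reduce
    rw [dif_pos hbij]
    exact hΦf a
  obtain ⟨Φ, hΦ⟩ := hΦex
  have hΨex : ∃ Ψ : Equiv.Perm (Fin m) → Equiv.Perm (Fin n),
      ∀ v, (∀ q ∈ I₀.zip J₀, v q.1 = q.2) →
        (∀ a, Ψ v (f a) = f (v a)) ∧ (∀ x ∈ SC, (x, Ψ v x) ∈ I.zip J) := by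
    refine ⟨fun v => if hb : Function.Bijective (fun x : Fin n =>
        if h : ∃ a, f a = x then f (v h.choose) else
          if h2 : ∃ y, (x, y) ∈ I.zip J then h2.choose else x) then Equiv.ofBijective _ hb
        else 1, ?_⟩
    intro v hv
    set g : Fin n → Fin n := fun x =>
      if h : ∃ a, f a = x then f (v h.choose) else
        if h2 : ∃ y, (x, y) ∈ I.zip J then h2.choose else x with hg
    have hgS : ∀ a, g (f a) = f (v a) := by
      intro a
      have hex : ∃ a', f a' = f a := ⟨a, rfl⟩
      have hceq : hex.choose = a := finj hex.choose_spec
      simp only [hg]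
      rw [dif_pos hex, hceq]
    have hgT : ∀ x ∈ SC, (x, g x) ∈ I.zip J ∧ g x ∈ SC := by
      intro x hx
      have hnS : ¬ ∃ a, f a = x := by
        rintro ⟨a, rfl⟩
        exact (hcompl (f a)).mp (frange a) hx
      obtain ⟨y, hy, hySC⟩ := hTsucc x hx
      have h2 : ∃ y, (x, y) ∈ I.zip J := ⟨y, hy⟩
      have hgx : g x = h2.choose := by
        simp only [hg]
        rw [dif_neg hnS, dif_pos h2]
      have hchoose := h2.choose_spec
      refine ⟨by rw [hgx]; exact hchoose, ?_⟩
      rw [hgx, zip_uniq_fst hI hchoose hy]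
      exact hySC
    have hginj : Function.Injective g := by
      intro x x' h
      rcases hcases x with hxS | hxT
      · obtain ⟨a, rfl⟩ := fsurj x hxS
        rcases hcases x' with hx'S | hx'T
        · obtain ⟨a', rfl⟩ := fsurj x' hx'S
          rw [hgS, hgS] at h
          rw [v.injective (finj h)]
        · exfalso
          have h1 : g (f a) ∈ SP := by rw [hgS]; exact frange _
          have h2 := (hgT x' hx'T).2
          rw [← h] at h2
          exact (hcompl _).mp h1 h2
      · rcases hcases x' with hx'S | hx'T
        · exfalso
          obtain ⟨a', rfl⟩ := fsurj x' hx'S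
          have h1 : g (f a') ∈ SP := by rw [hgS]; exact frange _
          have h2 := (hgT x hxT).2
          rw [h] at h2
          exact (hcompl _).mp h1 h2
        · exact zip_uniq_snd hJ (hgT x hxT).1 (h ▸ (hgT x' hx'T).1)
    have hbij : Function.Bijective g := Finite.injective_iff_bijective.mp hginj
    beta_reduce
    rw [dif_pos hbij]
    exact ⟨hgS, fun x hx => (hgT x hx).1⟩
  obtain ⟨Ψ, hΨ⟩ := hΨex
  have hΦmem : ∀ w : Equiv.Perm (Fin n), (∀ q ∈ I.zip J, w q.1 = q.2) →
      ∀ q ∈ I₀.zip J₀, Φ w q.1 = q.2 := by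
    rintro w hw ⟨a, b⟩ hab
    have h1 := hedge₀n a b hab
    have h2 := hw _ h1
    apply finj
    rw [hΦ w hw a]
    exact h2
  have hΨmem : ∀ v : Equiv.Perm (Fin m), (∀ q ∈ I₀.zip J₀, v q.1 = q.2) →
      ∀ q ∈ I.zip J, Ψ v q.1 = q.2 := by
    rintro v hv ⟨x, y⟩ hxy
    rcases hcases x with hxS | hxT
    · obtain ⟨a, rfl⟩ := fsurj x hxS
      have hyS : y ∈ SP := by
        rcases (hedge _ _).mp hxy with ⟨l, hl, hab'⟩ | ⟨l, hl, hab'⟩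
        · rw [hSPdef]
          refine Multiset.mem_bind.mpr ⟨l, hl, Multiset.mem_coe.mpr ?_⟩
          simp only [pathEdges] at hab'
          exact List.mem_of_mem_tail (List.of_mem_zip hab').2
        · exfalso
          have hfa : f a ∈ SC := by
            rw [hSCdef]
            simp only [cycleEdges] at hab'
            exact Multiset.mem_bind.mpr ⟨l, hl, Multiset.mem_coe.mpr (List.of_mem_zip hab').1⟩
          exact (hcompl _).mp (frange a) hfa
      obtain ⟨b, rfl⟩ := fsurj y hyS
      have hab := hedgen₀ a b hxy
      have hv2 := hv _ hab
      show Ψ v (f a) = f b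
      rw [(hΨ v hv).1 a, hv2]
    · exact zip_uniq_fst hI ((hΨ v hv).2 x hxT) hxy
  have hleft : ∀ w : Equiv.Perm (Fin n), (∀ q ∈ I.zip J, w q.1 = q.2) → Ψ (Φ w) = w := by
    intro w hw
    have hΦw := hΦmem w hw
    apply Equiv.ext
    intro x
    rcases hcases x with hxS | hxT
    · obtain ⟨a, rfl⟩ := fsurj x hxS
      rw [(hΨ (Φ w) hΦw).1 a, hΦ w hw a]
    · have h1 := (hΨ (Φ w) hΦw).2 x hxT
      exact (hw _ h1).symm
  have hright : ∀ v : Equiv.Perm (Fin m), (∀ q ∈ I₀.zip J₀, v q.1 = q.2) → Φ (Ψ v) = v := by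
    intro v hv
    have hΨv := hΨmem v hv
    apply Equiv.ext
    intro a
    apply finj
    rw [hΦ (Ψ v) hΨv a, (hΨ v hv).1 a]
  have hsummand : ∀ w : Equiv.Perm (Fin n), (∀ q ∈ I.zip J, w q.1 = q.2) →
      pProd N (cycType w) = pProd N (cycType (Φ w)) * pProd N (C.map List.length) := by
    intro w hw
    have hA : cycTypeG (w.subtypePerm (fun x => (hSinv w hw x).symm)) = cycTypeG (Φ w) := by
      refine (cycTypeG_congr (Equiv.ofBijective (fun a : Fin m =>
          (⟨f a, (hmemS _).mpr (frange a)⟩ : {x // x ∈ Sfin})) ?_) (Φ w) _ ?_).symm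
      · constructor
        · intro a a' h
          exact finj (congrArg Subtype.val h)
        · rintro ⟨x, hx⟩
          obtain ⟨a, rfl⟩ := fsurj x ((hmemS _).mp hx)
          exact ⟨a, rfl⟩
      · intro a
        apply Subtype.ext
        exact hΦ w hw a
    have hB : cycTypeG (w.subtypePerm
          (fun x => not_iff_not.mpr (hSinv w hw x).symm) : Equiv.Perm {x // ¬ x ∈ Sfin})
        = C.map List.length := by
      have h1 : cycTypeG (w.subtypePerm
            (fun x => not_iff_not.mpr (hSinv w hw x).symm) : Equiv.Perm {x // ¬ x ∈ Sfin})
          = cycTypeG (w.subtypePerm (fun x => (hTinv w hw x).symm) : Equiv.Perm {x // x ∈ Tfin}) := by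
        refine cycTypeG_congr (Equiv.subtypeEquivRight ?_) _ _ ?_
        · intro x
          show ¬ x ∈ Sfin ↔ x ∈ Tfin
          rw [hmemS, hmemT, hcompl]
          exact not_not
        · intro x
          apply Subtype.ext
          rfl
      rw [h1]
      exact cycTypeG_cycles C.card (Fin n) C rfl hCne hSCnd w
        (hwcyc w hw) Tfin hSCdef (hTinv w hw)
    rw [cycType_eq_cycTypeG, cycType_eq_cycTypeG,
      cycTypeG_split w (fun x => x ∈ Sfin) (hSinv w hw), pProd_add]
    exact congrArg₂ (· * ·) (congrArg (pProd N) ((cycTypeG_irrel _).trans hA))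
      (congrArg (pProd N) ((cycTypeG_irrel _).trans hB))
  simp only [atomic]
  rw [Finset.sum_mul]
  refine Finset.sum_nbij' Φ Ψ ?_ ?_ ?_ ?_ ?_
  · intro w hwm
    rw [Finset.mem_filter] at hwm ⊢
    exact ⟨Finset.mem_univ _, (hmemm _).mpr (hΦmem w ((hmemn w).mp hwm.2))⟩
  · intro v hvm
    rw [Finset.mem_filter] at hvm ⊢
    exact ⟨Finset.mem_univ _, (hmemn _).mpr (hΨmem v ((hmemm v).mp hvm.2))⟩
  · intro w hwm
    rw [Finset.mem_filter] at hwm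
    exact hleft w ((hmemn w).mp hwm.2)
  · intro v hvm
    rw [Finset.mem_filter] at hvm
    exact hright v ((hmemm v).mp hvm.2)
  · intro w hwm
    rw [Finset.mem_filter] at hwm
    exact hsummand w ((hmemn w).mp hwm.2)
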